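/- arXiv:1510.03001 — 4 statements merged into one kernel-verified Lean document; each statement's English description precedes it below -/
import Mathlib

section
/- Let D be a twisted link diagram and let D̃ be its double covering diagram. Then the upper virtual link group of D̃ is isomorphic to the lower virtual link group of D̃. -/
/-! Combinatorial model of twisted link diagrams (Gauss-data level) and their
Wirtinger-type groups, following Bourgoin and Kamada–Kamada.

A crossing is recorded as `(sign, i, i', j, j')` where the over-strand runs from
semi-arc `i` to semi-arc `i'` and the under-strand from `j` to `j'`; `sign = true`
means a positive crossing.  A bar `(i, i')` separates semi-arc `i` from `i'`. -/

/-- A twisted link diagram, encoded by its semi-arc/crossing/bar combinatorics. -/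
structure TwistedDiagramData (α : Type) where
  crossings : List (Bool × α × α × α × α)
  bars : List (α × α)

/-- A virtual link diagram (no bars); `joins (a, b)` records that semi-arc `a` is
connected to semi-arc `b` through arcs passing only virtual crossings. -/
structure VirtualDiagramData (α : Type) where
  crossings : List (Bool × α × α × α × α)
  joins : List (α × α)

open FreeGroup

/-- The two upper Wirtinger relators of a crossing: for a positive crossing
`x_{i'} = x_i` and `x_{j'} = x_i⁻¹ x_j x_i`; for a negative crossing
`x_{i'} = x_i` and `x_{j'} = x_i x_j x_i⁻¹`. -/
def upperRelators {α : Type} (c : Bool × α × α × α × α) : List (FreeGroup α) :=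
  match c with
  | (s, i, i1, j, j1) =>
    if s then
      [of i1 * (of i)⁻¹, of j1 * ((of i)⁻¹ * of j * of i)⁻¹]
    else
      [of i1 * (of i)⁻¹, of j1 * (of i * of j * (of i)⁻¹)⁻¹]

/-- The two lower Wirtinger relators of a crossing: for a positive crossing
`y_{i'} = y_j⁻¹ y_i y_j` and `y_{j'} = y_j`; for a negative crossing
`y_{i'} = y_j y_i y_j⁻¹` and `y_{j'} = y_j`. -/
def lowerRelators {α : Type} (c : Bool × α × α × α × α) : List (FreeGroup α) :=
  match c with
  | (s, i, i1, j, j1) =>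
    if s then
      [of i1 * ((of j)⁻¹ * of i * of j)⁻¹, of j1 * (of j)⁻¹]
    else
      [of i1 * (of j * of i * (of j)⁻¹)⁻¹, of j1 * (of j)⁻¹]

/-- Relabel the semi-arcs of a crossing. -/
def mapCrossing {α β : Type} (f : α → β) (c : Bool × α × α × α × α) :
    Bool × β × β × β × β :=
  match c with
  | (s, i, i1, j, j1) => (s, f i, f i1, f j, f j1)

/-- The upper virtual link group of a virtual diagram. -/
def VirtualDiagramData.upperGroup {α : Type} (d : VirtualDiagramData α) : Type :=
  PresentedGroup {g | g ∈ d.crossings.flatMap upperRelators ++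
    d.joins.map (fun p => of p.2 * (of p.1)⁻¹)}

/-- The lower virtual link group of a virtual diagram. -/
def VirtualDiagramData.lowerGroup {α : Type} (d : VirtualDiagramData α) : Type :=
  PresentedGroup {g | g ∈ d.crossings.flatMap lowerRelators ++
    d.joins.map (fun p => of p.2 * (of p.1)⁻¹)}

noncomputable instance {α : Type} (d : VirtualDiagramData α) : Group d.upperGroup := by
  unfold VirtualDiagramData.upperGroup; infer_instance

noncomputable instance {α : Type} (d : VirtualDiagramData α) : Group d.lowerGroup := by
  unfold VirtualDiagramData.lowerGroup; infer_instance

/-- The upper virtual link group of a twisted diagram (generated by the `x_i`). -/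
def TwistedDiagramData.upperGroup {α : Type} (d : TwistedDiagramData α) : Type :=
  PresentedGroup {g | g ∈ d.crossings.flatMap upperRelators}

/-- The lower virtual link group of a twisted diagram (generated by the `y_i`). -/
def TwistedDiagramData.lowerGroup {α : Type} (d : TwistedDiagramData α) : Type :=
  PresentedGroup {g | g ∈ d.crossings.flatMap lowerRelators}

noncomputable instance {α : Type} (d : TwistedDiagramData α) : Group d.upperGroup := by
  unfold TwistedDiagramData.upperGroup; infer_instance

noncomputable instance {α : Type} (d : TwistedDiagramData α) : Group d.lowerGroup := by
  unfold TwistedDiagramData.lowerGroup; infer_instance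

/-- Bourgoin's twisted link group of a twisted diagram: generators `x_i = inl i`,
`y_i = inr i`, upper relations on the `x`'s and lower relations on the `y`'s at each
crossing, and relations `x_{i'} = y_i`, `y_{i'} = x_i` at each bar `(i, i')`. -/
def TwistedDiagramData.twistedGroup {α : Type} (d : TwistedDiagramData α) : Type :=
  PresentedGroup {g : FreeGroup (α ⊕ α) |
    g ∈ (d.crossings.map (mapCrossing Sum.inl)).flatMap upperRelators ++
        (d.crossings.map (mapCrossing Sum.inr)).flatMap lowerRelators ++
        d.bars.flatMap (fun p =>
          [of (Sum.inl p.2) * (of (Sum.inr p.1))⁻¹,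
           of (Sum.inr p.2) * (of (Sum.inl p.1))⁻¹])}

noncomputable instance {α : Type} (d : TwistedDiagramData α) : Group d.twistedGroup := by
  unfold TwistedDiagramData.twistedGroup; infer_instance

/-- The double covering diagram `D̃` of a twisted diagram `D`: one copy (`inl`) of each
crossing of `D`, one mirrored copy (`inr`, over/under exchanged since `s` is the
reflection composed with the crossing change, which preserves signs), and each bar
replaced by the two connecting arcs joining `D` to `s(D)`. -/
def TwistedDiagramData.doubleCover {α : Type} (d : TwistedDiagramData α) :
    VirtualDiagramData (α ⊕ α) where
  crossings := d.crossings.flatMap (fun c =>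
    [mapCrossing Sum.inl c,
     mapCrossing Sum.inr (match c with | (s, i, i1, j, j1) => (s, j, j1, i, i1))])
  joins := d.bars.flatMap (fun p =>
    [(Sum.inr p.1, Sum.inl p.2), (Sum.inl p.1, Sum.inr p.2)])

private lemma swap_invol {α : Type} (g : FreeGroup (α ⊕ α)) :
    FreeGroup.freeGroupCongr (Equiv.sumComm α α)
      (FreeGroup.freeGroupCongr (Equiv.sumComm α α) g) = g := by
  have h : (FreeGroup.freeGroupCongr (Equiv.sumComm α α)).symm
      = FreeGroup.freeGroupCongr (Equiv.sumComm α α) := by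
    rw [FreeGroup.freeGroupCongr_symm, Equiv.sumComm_symm]
  conv_lhs => rw [show FreeGroup.freeGroupCongr (Equiv.sumComm α α) g
    = (FreeGroup.freeGroupCongr (Equiv.sumComm α α)).symm g from by rw [h]]
  exact MulEquiv.apply_symm_apply _ _

/-- For a twisted link diagram `D` with double covering diagram `D̃`,
the upper virtual link group of `D̃` is isomorphic to the lower virtual link group
of `D̃`. -/
theorem upperGroup_doubleCover_iso_lowerGroup {α : Type} (d : TwistedDiagramData α) :
    Nonempty (d.doubleCover.upperGroup ≃* d.doubleCover.lowerGroup) := by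
  set σ := FreeGroup.freeGroupCongr (Equiv.sumComm α α) with hσ
  have key1 : ∀ g : FreeGroup (α ⊕ α),
      g ∈ d.doubleCover.crossings.flatMap upperRelators ++
        d.doubleCover.joins.map (fun p => of p.2 * (of p.1)⁻¹) →
      σ g ∈ d.doubleCover.crossings.flatMap lowerRelators ++
        d.doubleCover.joins.map (fun p => of p.2 * (of p.1)⁻¹) := by
    intro g hg
    simp only [List.mem_append, List.mem_flatMap, List.mem_map,
      TwistedDiagramData.doubleCover, List.mem_cons, List.not_mem_nil, or_false] at hg ⊢
    rcases hg with ⟨a, ⟨⟨s, i, i1, j, j1⟩, hc, rfl | rfl⟩, hx⟩ |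
      ⟨a, ⟨⟨p1, p2⟩, hp, rfl | rfl⟩, rfl⟩
    · left
      refine ⟨_, ⟨⟨s, i, i1, j, j1⟩, hc, Or.inr rfl⟩, ?_⟩
      cases s <;> simp [upperRelators, mapCrossing] at hx <;>
        rcases hx with rfl | rfl <;>
        simp [lowerRelators, mapCrossing, hσ, FreeGroup.freeGroupCongr, FreeGroup.map.of]
    · left
      refine ⟨_, ⟨⟨s, i, i1, j, j1⟩, hc, Or.inl rfl⟩, ?_⟩
      cases s <;> simp [upperRelators, mapCrossing] at hx <;>
        rcases hx with rfl | rfl <;>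
        simp [lowerRelators, mapCrossing, hσ, FreeGroup.freeGroupCongr, FreeGroup.map.of]
    · right
      exact ⟨_, ⟨⟨p1, p2⟩, hp, Or.inr rfl⟩,
        by simp [hσ, FreeGroup.freeGroupCongr, FreeGroup.map.of]⟩
    · right
      exact ⟨_, ⟨⟨p1, p2⟩, hp, Or.inl rfl⟩,
        by simp [hσ, FreeGroup.freeGroupCongr, FreeGroup.map.of]⟩
  have key2 : ∀ g : FreeGroup (α ⊕ α),
      g ∈ d.doubleCover.crossings.flatMap lowerRelators ++
        d.doubleCover.joins.map (fun p => of p.2 * (of p.1)⁻¹) →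
      σ g ∈ d.doubleCover.crossings.flatMap upperRelators ++
        d.doubleCover.joins.map (fun p => of p.2 * (of p.1)⁻¹) := by
    intro g hg
    simp only [List.mem_append, List.mem_flatMap, List.mem_map,
      TwistedDiagramData.doubleCover, List.mem_cons, List.not_mem_nil, or_false] at hg ⊢
    rcases hg with ⟨a, ⟨⟨s, i, i1, j, j1⟩, hc, rfl | rfl⟩, hx⟩ |
      ⟨a, ⟨⟨p1, p2⟩, hp, rfl | rfl⟩, rfl⟩
    · left
      refine ⟨_, ⟨⟨s, i, i1, j, j1⟩, hc, Or.inr rfl⟩, ?_⟩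
      cases s <;> simp [lowerRelators, mapCrossing] at hx <;>
        rcases hx with rfl | rfl <;>
        simp [upperRelators, mapCrossing, hσ, FreeGroup.freeGroupCongr, FreeGroup.map.of]
    · left
      refine ⟨_, ⟨⟨s, i, i1, j, j1⟩, hc, Or.inl rfl⟩, ?_⟩
      cases s <;> simp [lowerRelators, mapCrossing] at hx <;>
        rcases hx with rfl | rfl <;>
        simp [upperRelators, mapCrossing, hσ, FreeGroup.freeGroupCongr, FreeGroup.map.of]
    · right
      exact ⟨_, ⟨⟨p1, p2⟩, hp, Or.inr rfl⟩,
        by simp [hσ, FreeGroup.freeGroupCongr, FreeGroup.map.of]⟩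
    · right
      exact ⟨_, ⟨⟨p1, p2⟩, hp, Or.inl rfl⟩,
        by simp [hσ, FreeGroup.freeGroupCongr, FreeGroup.map.of]⟩
  have hset : σ '' {g | g ∈ d.doubleCover.crossings.flatMap upperRelators ++
        d.doubleCover.joins.map (fun p => of p.2 * (of p.1)⁻¹)} =
      {g | g ∈ d.doubleCover.crossings.flatMap lowerRelators ++
        d.doubleCover.joins.map (fun p => of p.2 * (of p.1)⁻¹)} := by
    ext g
    constructor
    · rintro ⟨x, hx, rfl⟩
      exact key1 x hx
    · intro hg
      exact ⟨σ g, key2 g hg, swap_invol g⟩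
  unfold VirtualDiagramData.upperGroup VirtualDiagramData.lowerGroup
  have e := PresentedGroup.equivPresentedGroup
    {g | g ∈ d.doubleCover.crossings.flatMap upperRelators ++
      d.doubleCover.joins.map (fun p => of p.2 * (of p.1)⁻¹)} (Equiv.sumComm α α)
  rw [hσ] at hset
  rw [hset] at e
  exact ⟨e⟩
end

section
/- The twisted link group of a twisted link diagram D is isomorphic to the (upper) virtual link group of its double covering diagram D̃. -/
open FreeGroup

lemma presented_congr {α : Type} {S T : Set (FreeGroup α)} (h : S = T) :
    Nonempty (PresentedGroup S ≃* PresentedGroup T) := by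
  subst h; exact ⟨MulEquiv.refl _⟩

lemma lower_eq_upper_swap {β : Type} (c : Bool × β × β × β × β) (g : FreeGroup β) :
    g ∈ lowerRelators c ↔
      g ∈ upperRelators (c.1, c.2.2.2.1, c.2.2.2.2, c.2.1, c.2.2.1) := by
  obtain ⟨s, i, i1, j, j1⟩ := c
  cases s <;> simp [lowerRelators, upperRelators, or_comm]

/-- The twisted link group of a twisted link diagram `D` is
isomorphic to the (upper) virtual link group of its double covering diagram `D̃`. -/
theorem twistedGroup_iso_upperGroup_doubleCover {α : Type} (d : TwistedDiagramData α) :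
    Nonempty (d.twistedGroup ≃* d.doubleCover.upperGroup) := by
  apply presented_congr
  ext g
  simp only [Set.mem_setOf_eq, List.mem_append, List.mem_flatMap, List.mem_map,
    TwistedDiagramData.doubleCover, List.mem_cons, List.mem_singleton,
    List.not_mem_nil, or_false]
  constructor
  · rintro ((⟨x, ⟨c, hc, rfl⟩, hx⟩ | ⟨x, ⟨c, hc, rfl⟩, hx⟩) | ⟨p, hp, (rfl | rfl)⟩)
    · exact Or.inl ⟨_, ⟨c, hc, Or.inl rfl⟩, hx⟩
    · obtain ⟨s, i, i1, j, j1⟩ := c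
      refine Or.inl ⟨_, ⟨_, hc, Or.inr rfl⟩, ?_⟩
      exact (lower_eq_upper_swap (mapCrossing Sum.inr (s, i, i1, j, j1)) g).mp hx
    · exact Or.inr ⟨(Sum.inr p.1, Sum.inl p.2), ⟨p, hp, Or.inl rfl⟩, rfl⟩
    · exact Or.inr ⟨(Sum.inl p.1, Sum.inr p.2), ⟨p, hp, Or.inr rfl⟩, rfl⟩
  · rintro (⟨x, ⟨c, hc, (rfl | rfl)⟩, hx⟩ | ⟨q, ⟨p, hp, (rfl | rfl)⟩, rfl⟩)
    · exact Or.inl (Or.inl ⟨_, ⟨c, hc, rfl⟩, hx⟩)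
    · obtain ⟨s, i, i1, j, j1⟩ := c
      refine Or.inl (Or.inr ⟨mapCrossing Sum.inr (s, i, i1, j, j1), ⟨_, hc, rfl⟩, ?_⟩)
      exact (lower_eq_upper_swap (mapCrossing Sum.inr (s, i, i1, j, j1)) g).mpr hx
    · exact Or.inr ⟨p, hp, Or.inl rfl⟩
    · exact Or.inr ⟨p, hp, Or.inr rfl⟩
end

section
/- If K is a virtual link whose (upper) virtual link group is not isomorphic to its lower virtual link group, then K is not the double covering of any twisted link. -/
open FreeGroup

/-- A virtual link diagram with unspecified semi-arc index type. -/
def VDiag : Type 1 := Σ α : Type, VirtualDiagramData α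

section Aux
variable {α : Type}

open FreeGroup

private def dcc (c : Bool × α × α × α × α) : List (Bool × (α ⊕ α) × (α ⊕ α) × (α ⊕ α) × (α ⊕ α)) :=
  [mapCrossing Sum.inl c,
   mapCrossing Sum.inr (match c with | (s, i, i1, j, j1) => (s, j, j1, i, i1))]

private lemma cr_mem (c : Bool × α × α × α × α) (g : FreeGroup (α ⊕ α)) :
    (∃ a ∈ dcc c, g ∈ (upperRelators a).map (freeGroupCongr (Equiv.sumComm α α))) ↔
      ∃ a ∈ dcc c, g ∈ lowerRelators a := by
  obtain ⟨s, i, i1, j, j1⟩ := c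
  cases s <;>
    simp [dcc, upperRelators, lowerRelators, mapCrossing, mul_assoc] <;> tauto

private def barPairs (p : α × α) : List ((α ⊕ α) × (α ⊕ α)) :=
  [(Sum.inr p.1, Sum.inl p.2), (Sum.inl p.1, Sum.inr p.2)]

private lemma bar_mem (p : α × α) (g : FreeGroup (α ⊕ α)) :
    g ∈ ((barPairs p).map
        (fun q : (α ⊕ α) × (α ⊕ α) => of q.2 * (of q.1)⁻¹)).map
          (freeGroupCongr (Equiv.sumComm α α)) ↔
      g ∈ (barPairs p).map
        (fun q : (α ⊕ α) × (α ⊕ α) => of q.2 * (of q.1)⁻¹) := by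
  simp [barPairs]; tauto

private def presentedCongr {β : Type} {S T : Set (FreeGroup β)} (h : S = T) :
    PresentedGroup S ≃* PresentedGroup T := by
  subst h; exact MulEquiv.refl _

lemma swap_image (d : TwistedDiagramData α) :
    FreeGroup.freeGroupCongr (Equiv.sumComm α α) ''
      {g | g ∈ d.doubleCover.crossings.flatMap upperRelators ++
        d.doubleCover.joins.map (fun p => of p.2 * (of p.1)⁻¹)} =
      {g | g ∈ d.doubleCover.crossings.flatMap lowerRelators ++
        d.doubleCover.joins.map (fun p => of p.2 * (of p.1)⁻¹)} := by
  have himg : ∀ (L : List (FreeGroup (α ⊕ α))),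
      FreeGroup.freeGroupCongr (Equiv.sumComm α α) '' {g | g ∈ L} =
        {g | g ∈ L.map (freeGroupCongr (Equiv.sumComm α α))} := by
    intro L; ext x; simp [List.mem_map, eq_comm]
  rw [himg]
  ext g
  have hc : d.doubleCover.crossings = d.crossings.flatMap dcc := rfl
  have hj : d.doubleCover.joins = d.bars.flatMap barPairs := rfl
  simp only [Set.mem_setOf_eq, List.map_append, List.mem_append, hc, hj,
    List.flatMap_assoc, List.map_flatMap, List.mem_flatMap]
  exact or_congr
    (exists_congr fun c => and_congr_right fun _ => cr_mem c g)
    (exists_congr fun p => and_congr_right fun _ => bar_mem p g)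

/-- The double covering diagram has isomorphic upper and lower groups. -/
noncomputable def doubleCoverUpperLower (d : TwistedDiagramData α) :
    d.doubleCover.upperGroup ≃* d.doubleCover.lowerGroup := by
  unfold VirtualDiagramData.upperGroup VirtualDiagramData.lowerGroup
  exact (PresentedGroup.equivPresentedGroup _ (Equiv.sumComm α α)).trans
    (presentedCongr (swap_image d))

end Aux

/-- Let `VirtEquiv` be the equivalence of virtual link diagrams
(generated by plane isotopies, R-moves and V-moves); the upper and lower virtual link
groups are invariants of it.  If `K` is a virtual link (diagram) whose upper virtual
link group is not isomorphic to its lower virtual link group, then `K` is not the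
double covering of any twisted link. -/
theorem not_doubleCover_of_upper_ne_lower
    (VirtEquiv : VDiag → VDiag → Prop)
    (hupper : ∀ a b : VDiag, VirtEquiv a b → Nonempty (a.2.upperGroup ≃* b.2.upperGroup))
    (hlower : ∀ a b : VDiag, VirtEquiv a b → Nonempty (a.2.lowerGroup ≃* b.2.lowerGroup))
    (K : VDiag)
    (h : IsEmpty (K.2.upperGroup ≃* K.2.lowerGroup)) :
    ¬ ∃ (α : Type) (d : TwistedDiagramData α),
        VirtEquiv ⟨α ⊕ α, d.doubleCover⟩ K := by
  rintro ⟨α, d, hv⟩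
  obtain ⟨e1⟩ := hupper _ _ hv
  obtain ⟨e2⟩ := hlower _ _ hv
  exact h.false (e1.symm.trans ((doubleCoverUpperLower d).trans e2))
end

section
/- If D is a virtual link diagram (no bars), then the twisted link quandle of D is isomorphic to the free product of the upper virtual link quandle Q(D) and the lower virtual link quandle Q^l(D). -/
/-! Presented quandles.  A quandle is a set with binary operations `∗` (`op`) and its
inverse `∗̄` (`opInv`) satisfying `a ∗ a = a`, `(a ∗ b) ∗̄ b = a = (a ∗̄ b) ∗ b` and
`(a ∗ b) ∗ c = (a ∗ c) ∗ (b ∗ c)`.  A presented quandle is the quotient of the term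
algebra on a set of generators by the congruence generated by the quandle axioms
together with a given set of relations. -/

/-- Terms of the quandle signature on generators `α`. -/
inductive QTerm (α : Type) : Type
  | gen : α → QTerm α
  | op : QTerm α → QTerm α → QTerm α
  | opInv : QTerm α → QTerm α → QTerm α

/-- Relabelling of generators in a quandle term. -/
def QTerm.map {α β : Type} (f : α → β) : QTerm α → QTerm β
  | .gen a => .gen (f a)
  | .op a b => .op (a.map f) (b.map f)
  | .opInv a b => .opInv (a.map f) (b.map f)

/-- The congruence on quandle terms generated by the quandle axioms and a set `R` of
relations (pairs of terms to be identified). -/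
inductive QRel {α : Type} (R : Set (QTerm α × QTerm α)) : QTerm α → QTerm α → Prop
  | of {a b : QTerm α} : (a, b) ∈ R → QRel R a b
  | refl (a : QTerm α) : QRel R a a
  | symm {a b : QTerm α} : QRel R a b → QRel R b a
  | trans {a b c : QTerm α} : QRel R a b → QRel R b c → QRel R a c
  | congrOp {a a' b b' : QTerm α} : QRel R a a' → QRel R b b' →
      QRel R (.op a b) (.op a' b')
  | congrOpInv {a a' b b' : QTerm α} : QRel R a a' → QRel R b b' →
      QRel R (.opInv a b) (.opInv a' b')
  | idem (a : QTerm α) : QRel R (.op a a) a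
  | rightInv (a b : QTerm α) : QRel R (.opInv (.op a b) b) a
  | leftInv (a b : QTerm α) : QRel R (.op (.opInv a b) b) a
  | distrib (a b c : QTerm α) :
      QRel R (.op (.op a b) c) (.op (.op a c) (.op b c))

/-- The quandle presented by generators `α` and relations `R`. -/
def PresentedQuandle {α : Type} (R : Set (QTerm α × QTerm α)) : Type :=
  Quot (QRel R)

namespace PresentedQuandle

variable {α : Type} {R : Set (QTerm α × QTerm α)}

/-- The generator `a` as an element of the presented quandle. -/
def gen (a : α) : PresentedQuandle R := Quot.mk _ (.gen a)

/-- The quandle operation `∗` on the presented quandle. -/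
def op : PresentedQuandle R → PresentedQuandle R → PresentedQuandle R :=
  Quot.map₂ QTerm.op (fun a _ _ h => QRel.congrOp (QRel.refl a) h)
    (fun _ _ b h => QRel.congrOp h (QRel.refl b))

/-- The inverse quandle operation `∗̄` on the presented quandle. -/
def opInv : PresentedQuandle R → PresentedQuandle R → PresentedQuandle R :=
  Quot.map₂ QTerm.opInv (fun a _ _ h => QRel.congrOpInv (QRel.refl a) h)
    (fun _ _ b h => QRel.congrOpInv h (QRel.refl b))

end PresentedQuandle

/-- A bijection between two presented quandles is a quandle isomorphism if it
preserves both quandle operations. -/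
def IsQuandleIso {α β : Type} {R : Set (QTerm α × QTerm α)}
    {S : Set (QTerm β × QTerm β)} (e : PresentedQuandle R ≃ PresentedQuandle S) :
    Prop :=
  (∀ a b, e (a.op b) = (e a).op (e b)) ∧ ∀ a b, e (a.opInv b) = (e a).opInv (e b)

/-- Relabelling of generators in a relation. -/
def pairMap {α β : Type} (f : α → β) (p : QTerm α × QTerm α) :
    QTerm β × QTerm β :=
  (p.1.map f, p.2.map f)

/-- The free product of the quandles presented by `(α, R)` and `(β, S)`: it is
presented by the disjoint union of their underlying sets as generators, with all
relations holding in either factor. -/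
def fpRels {α β : Type} (R : Set (QTerm α × QTerm α)) (S : Set (QTerm β × QTerm β)) :
    Set (QTerm (PresentedQuandle R ⊕ PresentedQuandle S) ×
      QTerm (PresentedQuandle R ⊕ PresentedQuandle S)) :=
  {p | (∃ a b : PresentedQuandle R,
          p = (.op (.gen (.inl a)) (.gen (.inl b)), .gen (.inl (a.op b))) ∨
          p = (.opInv (.gen (.inl a)) (.gen (.inl b)), .gen (.inl (a.opInv b)))) ∨
       (∃ a b : PresentedQuandle S,
          p = (.op (.gen (.inr a)) (.gen (.inr b)), .gen (.inr (a.op b))) ∨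
          p = (.opInv (.gen (.inr a)) (.gen (.inr b)), .gen (.inr (a.opInv b))))}

/-- The free product of two presented quandles. -/
def QuandleFreeProduct {α β : Type} (R : Set (QTerm α × QTerm α))
    (S : Set (QTerm β × QTerm β)) : Type :=
  PresentedQuandle (fpRels R S)

/-- Upper quandle relations at the crossings: at a positive crossing
`x_{i'} = x_i` and `x_{j'} = x_j ∗ x_i`; at a negative one `x_{j'} = x_j ∗̄ x_i`. -/
def upperQRels {α : Type} (crossings : List (Bool × α × α × α × α)) :
    Set (QTerm α × QTerm α) :=
  {p | ∃ c ∈ crossings,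
    p = (.gen c.2.2.1, .gen c.2.1) ∨
    (c.1 = true ∧ p = (.gen c.2.2.2.2, .op (.gen c.2.2.2.1) (.gen c.2.1))) ∨
    (c.1 = false ∧ p = (.gen c.2.2.2.2, .opInv (.gen c.2.2.2.1) (.gen c.2.1)))}

/-- Lower quandle relations at the crossings: at a positive crossing
`y_{j'} = y_j` and `y_{i'} = y_i ∗ y_j`; at a negative one `y_{i'} = y_i ∗̄ y_j`. -/
def lowerQRels {α : Type} (crossings : List (Bool × α × α × α × α)) :
    Set (QTerm α × QTerm α) :=
  {p | ∃ c ∈ crossings,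
    p = (.gen c.2.2.2.2, .gen c.2.2.2.1) ∨
    (c.1 = true ∧ p = (.gen c.2.2.1, .op (.gen c.2.1) (.gen c.2.2.2.1))) ∨
    (c.1 = false ∧ p = (.gen c.2.2.1, .opInv (.gen c.2.1) (.gen c.2.2.2.1)))}

/-- Bar relations `x_{i'} = y_i` and `y_{i'} = x_i` at each bar `(i, i')`. -/
def barQRels {α : Type} (bars : List (α × α)) :
    Set (QTerm (α ⊕ α) × QTerm (α ⊕ α)) :=
  {p | ∃ b ∈ bars,
    p = (.gen (.inl b.2), .gen (.inr b.1)) ∨ p = (.gen (.inr b.2), .gen (.inl b.1))}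

/-- The relations of the twisted link quandle of a twisted diagram. -/
def twistedQRels {α : Type} (d : TwistedDiagramData α) :
    Set (QTerm (α ⊕ α) × QTerm (α ⊕ α)) :=
  (pairMap (Sum.inl : α → α ⊕ α) '' upperQRels d.crossings) ∪
    (pairMap (Sum.inr : α → α ⊕ α) '' lowerQRels d.crossings) ∪ barQRels d.bars


section NoBarAux

variable {α : Type} {R S : Set (QTerm α × QTerm α)}

/-- Relations obtained as the disjoint union of two relation sets. -/
def noBarRels (R S : Set (QTerm α × QTerm α)) :
    Set (QTerm (α ⊕ α) × QTerm (α ⊕ α)) :=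
  (pairMap (Sum.inl : α → α ⊕ α) '' R) ∪ (pairMap (Sum.inr : α → α ⊕ α) '' S)

/-- Forward map on terms. -/
def fwdT (R S : Set (QTerm α × QTerm α)) :
    QTerm (α ⊕ α) → QTerm (PresentedQuandle R ⊕ PresentedQuandle S) :=
  QTerm.map (Sum.map (PresentedQuandle.gen (R := R)) (PresentedQuandle.gen (R := S)))


theorem liftA (t : QTerm α) :
    QRel (fpRels R S) (fwdT R S (t.map Sum.inl)) (.gen (.inl (Quot.mk _ t))) := by
  induction t with
  | gen a => exact QRel.refl _
  | op a b iha ihb =>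
      refine QRel.trans (QRel.congrOp iha ihb) ?_
      exact QRel.of (Or.inl ⟨Quot.mk _ a, Quot.mk _ b, Or.inl rfl⟩)
  | opInv a b iha ihb =>
      refine QRel.trans (QRel.congrOpInv iha ihb) ?_
      exact QRel.of (Or.inl ⟨Quot.mk _ a, Quot.mk _ b, Or.inr rfl⟩)

theorem liftB (t : QTerm α) :
    QRel (fpRels R S) (fwdT R S (t.map Sum.inr)) (.gen (.inr (Quot.mk _ t))) := by
  induction t with
  | gen a => exact QRel.refl _
  | op a b iha ihb =>
      refine QRel.trans (QRel.congrOp iha ihb) ?_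
      exact QRel.of (Or.inr ⟨Quot.mk _ a, Quot.mk _ b, Or.inl rfl⟩)
  | opInv a b iha ihb =>
      refine QRel.trans (QRel.congrOpInv iha ihb) ?_
      exact QRel.of (Or.inr ⟨Quot.mk _ a, Quot.mk _ b, Or.inr rfl⟩)

theorem fwd_sound {a b : QTerm (α ⊕ α)} (h : QRel (noBarRels R S) a b) :
    QRel (fpRels R S) (fwdT R S a) (fwdT R S b) := by
  induction h with
  | of hm =>
      rcases hm with ⟨⟨u, v⟩, huv, heq⟩ | ⟨⟨u, v⟩, huv, heq⟩
      · cases heq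
        refine QRel.trans (liftA u) (QRel.trans ?_ (QRel.symm (liftA v)))
        rw [Quot.sound (QRel.of huv)]
        exact QRel.refl _
      · cases heq
        refine QRel.trans (liftB u) (QRel.trans ?_ (QRel.symm (liftB v)))
        rw [Quot.sound (QRel.of huv)]
        exact QRel.refl _
  | refl a => exact QRel.refl _
  | symm _ ih => exact QRel.symm ih
  | trans _ _ ih1 ih2 => exact QRel.trans ih1 ih2
  | congrOp _ _ ih1 ih2 => exact QRel.congrOp ih1 ih2
  | congrOpInv _ _ ih1 ih2 => exact QRel.congrOpInv ih1 ih2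
  | idem a => exact QRel.idem _
  | rightInv a b => exact QRel.rightInv _ _
  | leftInv a b => exact QRel.leftInv _ _
  | distrib a b c => exact QRel.distrib _ _ _

/-- The forward map. -/
def Fm (R S : Set (QTerm α × QTerm α)) :
    PresentedQuandle (noBarRels R S) → PresentedQuandle (fpRels R S) :=
  Quot.lift (fun t => Quot.mk _ (fwdT R S t)) (fun _ _ h => Quot.sound (fwd_sound h))

theorem emb_sound_l {p q : QTerm α} (h : QRel R p q) :
    QRel (noBarRels R S) (p.map Sum.inl) (q.map Sum.inl) := by
  induction h with
  | of hm => exact QRel.of (Or.inl ⟨_, hm, rfl⟩)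
  | refl a => exact QRel.refl _
  | symm _ ih => exact QRel.symm ih
  | trans _ _ ih1 ih2 => exact QRel.trans ih1 ih2
  | congrOp _ _ ih1 ih2 => exact QRel.congrOp ih1 ih2
  | congrOpInv _ _ ih1 ih2 => exact QRel.congrOpInv ih1 ih2
  | idem a => exact QRel.idem _
  | rightInv a b => exact QRel.rightInv _ _
  | leftInv a b => exact QRel.leftInv _ _
  | distrib a b c => exact QRel.distrib _ _ _

theorem emb_sound_r {p q : QTerm α} (h : QRel S p q) :
    QRel (noBarRels R S) (p.map Sum.inr) (q.map Sum.inr) := by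
  induction h with
  | of hm => exact QRel.of (Or.inr ⟨_, hm, rfl⟩)
  | refl a => exact QRel.refl _
  | symm _ ih => exact QRel.symm ih
  | trans _ _ ih1 ih2 => exact QRel.trans ih1 ih2
  | congrOp _ _ ih1 ih2 => exact QRel.congrOp ih1 ih2
  | congrOpInv _ _ ih1 ih2 => exact QRel.congrOpInv ih1 ih2
  | idem a => exact QRel.idem _
  | rightInv a b => exact QRel.rightInv _ _
  | leftInv a b => exact QRel.leftInv _ _
  | distrib a b c => exact QRel.distrib _ _ _

def jL (R S : Set (QTerm α × QTerm α)) :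
    PresentedQuandle R → PresentedQuandle (noBarRels R S) :=
  Quot.lift (fun t => Quot.mk _ (t.map Sum.inl))
    (fun _ _ h => Quot.sound (emb_sound_l h))

def jR (R S : Set (QTerm α × QTerm α)) :
    PresentedQuandle S → PresentedQuandle (noBarRels R S) :=
  Quot.lift (fun t => Quot.mk _ (t.map Sum.inr))
    (fun _ _ h => Quot.sound (emb_sound_r h))

/-- Backward map on terms. -/
def Bm (R S : Set (QTerm α × QTerm α)) :
    QTerm (PresentedQuandle R ⊕ PresentedQuandle S) →
      PresentedQuandle (noBarRels R S)
  | .gen (.inl a) => jL R S a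
  | .gen (.inr a) => jR R S a
  | .op a b => (Bm R S a).op (Bm R S b)
  | .opInv a b => (Bm R S a).opInv (Bm R S b)

variable {T : Set (QTerm (α ⊕ α) × QTerm (α ⊕ α))}

theorem pq_idem (x : PresentedQuandle T) : x.op x = x :=
  Quot.inductionOn x fun t => Quot.sound (QRel.idem t)

theorem pq_rightInv (x y : PresentedQuandle T) : (x.op y).opInv y = x :=
  Quot.inductionOn x fun a => Quot.inductionOn y fun b => Quot.sound (QRel.rightInv a b)

theorem pq_leftInv (x y : PresentedQuandle T) : (x.opInv y).op y = x :=
  Quot.inductionOn x fun a => Quot.inductionOn y fun b => Quot.sound (QRel.leftInv a b)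

theorem pq_distrib (x y z : PresentedQuandle T) :
    (x.op y).op z = (x.op z).op (y.op z) :=
  Quot.inductionOn x fun a => Quot.inductionOn y fun b => Quot.inductionOn z fun c => Quot.sound (QRel.distrib a b c)

theorem jL_op (a b : PresentedQuandle R) :
    jL R S (a.op b) = (jL R S a).op (jL R S b) :=
  Quot.inductionOn a fun _ => Quot.inductionOn b fun _ => rfl

theorem jL_opInv (a b : PresentedQuandle R) :
    jL R S (a.opInv b) = (jL R S a).opInv (jL R S b) :=
  Quot.inductionOn a fun _ => Quot.inductionOn b fun _ => rfl

theorem jR_op (a b : PresentedQuandle S) :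
    jR R S (a.op b) = (jR R S a).op (jR R S b) :=
  Quot.inductionOn a fun _ => Quot.inductionOn b fun _ => rfl

theorem jR_opInv (a b : PresentedQuandle S) :
    jR R S (a.opInv b) = (jR R S a).opInv (jR R S b) :=
  Quot.inductionOn a fun _ => Quot.inductionOn b fun _ => rfl

theorem bwd_sound {s t : QTerm (PresentedQuandle R ⊕ PresentedQuandle S)}
    (h : QRel (fpRels R S) s t) : Bm R S s = Bm R S t := by
  induction h with
  | of hm =>
      rcases hm with ⟨a, b, heq | heq⟩ | ⟨a, b, heq | heq⟩ <;> cases heq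
      · exact (jL_op a b).symm
      · exact (jL_opInv a b).symm
      · exact (jR_op a b).symm
      · exact (jR_opInv a b).symm
  | refl a => rfl
  | symm _ ih => exact ih.symm
  | trans _ _ ih1 ih2 => exact ih1.trans ih2
  | congrOp _ _ ih1 ih2 => show PresentedQuandle.op _ _ = _; rw [ih1, ih2]; rfl
  | congrOpInv _ _ ih1 ih2 =>
      show PresentedQuandle.opInv _ _ = _; rw [ih1, ih2]; rfl
  | idem a => exact pq_idem _
  | rightInv a b => exact pq_rightInv _ _
  | leftInv a b => exact pq_leftInv _ _
  | distrib a b c => exact pq_distrib _ _ _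

def Gm (R S : Set (QTerm α × QTerm α)) :
    PresentedQuandle (fpRels R S) → PresentedQuandle (noBarRels R S) :=
  Quot.lift (Bm R S) (fun _ _ h => bwd_sound h)

theorem GF (t : QTerm (α ⊕ α)) : Bm R S (fwdT R S t) = Quot.mk _ t := by
  induction t with
  | gen a => cases a <;> rfl
  | op a b iha ihb =>
      have h1 : Bm R S (fwdT R S (QTerm.op a b)) =
          PresentedQuandle.op (Bm R S (fwdT R S a)) (Bm R S (fwdT R S b)) := rfl
      rw [h1, iha, ihb]; rfl
  | opInv a b iha ihb =>
      have h1 : Bm R S (fwdT R S (QTerm.opInv a b)) =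
          PresentedQuandle.opInv (Bm R S (fwdT R S a)) (Bm R S (fwdT R S b)) := rfl
      rw [h1, iha, ihb]; rfl

theorem Fm_op (x y : PresentedQuandle (noBarRels R S)) :
    Fm R S (x.op y) = (Fm R S x).op (Fm R S y) :=
  Quot.inductionOn x fun _ => Quot.inductionOn y fun _ => rfl

theorem Fm_opInv (x y : PresentedQuandle (noBarRels R S)) :
    Fm R S (x.opInv y) = (Fm R S x).opInv (Fm R S y) :=
  Quot.inductionOn x fun _ => Quot.inductionOn y fun _ => rfl

theorem FB (s : QTerm (PresentedQuandle R ⊕ PresentedQuandle S)) :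
    Fm R S (Bm R S s) = Quot.mk _ s := by
  induction s with
  | gen a =>
      rcases a with a | a
      · exact Quot.inductionOn a fun p => Quot.sound (liftA p)
      · exact Quot.inductionOn a fun p => Quot.sound (liftB p)
  | op a b iha ihb =>
      show Fm R S (PresentedQuandle.op _ _) = _
      rw [Fm_op, iha, ihb]; rfl
  | opInv a b iha ihb =>
      show Fm R S (PresentedQuandle.opInv _ _) = _
      rw [Fm_opInv, iha, ihb]; rfl

theorem noBar_iso (R S : Set (QTerm α × QTerm α)) :
    ∃ e : PresentedQuandle (noBarRels R S) ≃ PresentedQuandle (fpRels R S),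
      IsQuandleIso e := by
  refine ⟨⟨Fm R S, Gm R S, fun x => Quot.inductionOn x fun t => GF t,
    fun y => Quot.inductionOn y fun s => FB s⟩, Fm_op, Fm_opInv⟩

end NoBarAux

/-- If `D` is a virtual link diagram (no bars), then the twisted
link quandle of `D` is isomorphic to the free product of the upper virtual link
quandle `Q(D)` and the lower virtual link quandle `Qˡ(D)`. -/
theorem twistedQuandle_of_no_bars_iso_freeProduct {α : Type}
    (d : TwistedDiagramData α) (h : d.bars = []) :
    ∃ e : PresentedQuandle (twistedQRels d) ≃
        QuandleFreeProduct (upperQRels d.crossings) (lowerQRels d.crossings),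
      IsQuandleIso e := by
  have hset : twistedQRels d =
      noBarRels (upperQRels d.crossings) (lowerQRels d.crossings) := by
    have hbar : barQRels d.bars = ∅ := by
      rw [h]; ext p; simp [barQRels]
    unfold twistedQRels noBarRels
    rw [hbar, Set.union_empty]
  rw [hset]
  exact noBar_iso _ _
end
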